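/- arXiv:1008.5383 — 4 statements merged into one kernel-verified Lean document; each statement's English description precedes it below -/
import Mathlib

section
/- Let A be an m×n real matrix of rank r, and let A^{∘h} denote the h-fold entrywise (Hadamard) product of A with itself. Then rank(A^{∘h}) ≤ C(r+h-1, h), the binomial coefficient. -/
/-!
Factor `A = B * C` through `r = rank A` inner indices. Expanding `(∑ t, B i t * C t j) ^ h` by the
multinomial theorem writes `A^{∘h}` as a product `B' * C'` whose inner index runs over the
multisets of size `h` in `Fin r`, of which there are `C(r + h - 1, h)`.
-/

/-- The Hadamard (entrywise) `h`-th power of a matrix. -/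
def hadamardPow {m n : Type*} (A : Matrix m n ℝ) (h : ℕ) : Matrix m n ℝ :=
  Matrix.of fun i j => (A i j) ^ h

open Matrix

theorem Matrix.exists_eq_mul_fin_rank {K m n : Type*} [Field K] [Fintype n]
    (A : Matrix m n K) :
    ∃ (B : Matrix m (Fin A.rank) K) (C : Matrix (Fin A.rank) n K), A = B * C := by
  let V := Submodule.span K (Set.range Aᵀ)
  have : FiniteDimensional K V := FiniteDimensional.span_of_finite K (Set.finite_range _)
  let b : Module.Basis (Fin A.rank) K V :=
    (Module.finBasis K V).reindex (finCongr (rank_eq_finrank_span_cols A).symm)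
  have hmem : ∀ j, Aᵀ j ∈ V := fun j => Submodule.subset_span ⟨j, rfl⟩
  refine ⟨of fun i k => (b k : m → K) i, of fun k j => b.repr ⟨Aᵀ j, hmem j⟩ k, ?_⟩
  ext i j
  have hcol := congrArg (fun x : V => (x : m → K) i) (b.sum_repr ⟨Aᵀ j, hmem j⟩)
  simp only [Submodule.coe_sum, SetLike.val_smul, Finset.sum_apply, Pi.smul_apply,
    smul_eq_mul] at hcol
  simp only [mul_apply, of_apply, mul_comm _ (b.repr _ _)]
  exact hcol.symm

theorem hadamardPow_mul_eq {m n ι : Type*} [Fintype ι] [DecidableEq ι]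
    (B : Matrix m ι ℝ) (C : Matrix ι n ℝ) (h : ℕ) :
    hadamardPow (B * C) h =
      (of fun i (k : Sym ι h) => ((k : Multiset ι).countPerms : ℝ) * (k.1.map (B i)).prod :
        Matrix m (Sym ι h) ℝ) * (of fun k j => (k.1.map (C · j)).prod : Matrix (Sym ι h) n ℝ) := by
  ext i j
  simp only [hadamardPow, of_apply, mul_apply, Finset.sum_pow, Finset.sym_univ, mul_assoc,
    Multiset.prod_map_mul]
  rfl

theorem rank_hadamardPow_mul_le {m n ι : Type*} [Fintype n] [Fintype ι]
    (B : Matrix m ι ℝ) (C : Matrix ι n ℝ) (h : ℕ) :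
    (hadamardPow (B * C) h).rank ≤ (Fintype.card ι + h - 1).choose h := by
  classical
  rw [hadamardPow_mul_eq, ← Sym.card_sym_eq_choose]
  exact (rank_mul_le_left _ _).trans (rank_le_card_width _)

/-- The rank of the `h`-fold Hadamard power of a real matrix of rank `r` is at most
`C(r + h - 1, h)`. -/
theorem rank_hadamardPow_le (m n : ℕ) (A : Matrix (Fin m) (Fin n) ℝ) (h : ℕ) :
    (hadamardPow A h).rank ≤ (A.rank + h - 1).choose h := by
  obtain ⟨B, C, hBC⟩ := A.exists_eq_mul_fin_rank
  simpa [← hBC] using rank_hadamardPow_mul_le B C h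
end

section
/- Let A be a real matrix of rank r. If for some positive integer h the Hadamard power A^{∘h} has rank exactly C(r+h-1, h), then for every j with 1 ≤ j ≤ h, the Hadamard power A^{∘j} has rank exactly C(r+j-1, j). -/
/-!
Factor `A = U * V` through `r = rank A` inner indices. By the multinomial theorem
`A^{∘j} = P_j * D_j * Q_jᵀ`, where the columns of `P_j` and `Q_j`, indexed by `Sym (Fin r) j`,
are the entrywise degree-`j` monomials in the columns of `U` and of `Vᵀ`, and `D_j` is the
invertible diagonal matrix of multinomial coefficients. Since `|Sym (Fin r) j| = C(r+j-1, j)`,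
`A^{∘j}` has that rank iff the columns of `P_j` and of `Q_j` are linearly independent.
Multiplying by a fixed monomial `z^{h-j}` embeds the degree-`j` columns into the degree-`h`
ones up to a diagonal matrix, so independence in degree `h` descends to degree `j`.
-/

open Matrix Module

theorem Multiset.countPerms_pos {α : Type*} [DecidableEq α] (s : Multiset α) :
    0 < s.countPerms :=
  Nat.multinomial_pos _ _

namespace Matrix

variable {R K : Type*} {m n N ι : Type*}

section Rank

variable [Field K]

theorem rank_eq_card_width_iff_linearIndependent_col [Fintype n] (M : Matrix m n K) :
    M.rank = Fintype.card n ↔ LinearIndependent K M.col := by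
  rw [rank_eq_finrank_span_cols, linearIndependent_iff_card_eq_finrank_span, Set.finrank,
    eq_comm]

theorem rank_mul_eq_left_of_rank_eq_card_height [Fintype n] [Fintype N] (P : Matrix m N K)
    {Q : Matrix N n K} (hQ : Q.rank = Fintype.card N) : (P * Q).rank = P.rank := by
  have hQ_surj : LinearMap.range Q.mulVecLin = ⊤ :=
    Submodule.eq_top_of_finrank_eq (by rwa [finrank_fintype_fun_eq_card])
  rw [rank, rank, mulVecLin_mul, LinearMap.range_comp_of_range_eq_top _ hQ_surj]

theorem rank_mul_eq_card_iff [Fintype n] [Fintype N] (P : Matrix m N K) (Q : Matrix N n K) :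
    (P * Q).rank = Fintype.card N ↔ P.rank = Fintype.card N ∧ Q.rank = Fintype.card N := by
  refine ⟨fun hPQ => ⟨?_, ?_⟩, fun ⟨hP, hQ⟩ => ?_⟩
  · exact le_antisymm P.rank_le_card_width (hPQ ▸ rank_mul_le_left P Q)
  · exact le_antisymm Q.rank_le_card_height (hPQ ▸ rank_mul_le_right P Q)
  · rw [rank_mul_eq_left_of_rank_eq_card_height P hQ, hP]

theorem exists_rank_factorization [Fintype n] (A : Matrix m n K) :
    ∃ (U : Matrix m (Fin A.rank) K) (V : Matrix (Fin A.rank) n K), U * V = A := by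
  let b : Basis (Fin A.rank) K (LinearMap.range A.mulVecLin) := finBasisOfFinrankEq K _ rfl
  have hcol (q : n) : A.col q ∈ LinearMap.range A.mulVecLin := by
    rw [range_mulVecLin]
    exact Submodule.subset_span ⟨q, rfl⟩
  refine ⟨of fun i k => (b k : m → K) i, of fun k q => b.repr ⟨_, hcol q⟩ k, ?_⟩
  ext i q
  have hq := congr_fun (congr_arg Subtype.val (b.sum_repr ⟨_, hcol q⟩)) i
  simp only [Submodule.coe_sum, Finset.sum_apply, Submodule.coe_smul, Pi.smul_apply,
    smul_eq_mul] at hq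
  simpa only [mul_apply, of_apply, col_apply, mul_comm] using hq

end Rank

section Monomial

def monomialMatrix [CommSemiring R] (W : Matrix m ι R) (j : ℕ) : Matrix m (Sym ι j) R :=
  of fun i s => ((s : Multiset ι).map (W i)).prod

theorem col_monomialMatrix_append [CommSemiring R] [Fintype m] [DecidableEq m]
    (W : Matrix m ι R) {j : ℕ} (s : Sym ι j) (e : ℕ) (z : ι) :
    (monomialMatrix W (j + e)).col (s.append (Sym.replicate e z)) =
      diagonal (fun i => W i z ^ e) *ᵥ (monomialMatrix W j).col s := by
  ext i
  simp [monomialMatrix, Sym.coe_append, Sym.coe_replicate, Multiset.prod_replicate,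
    mulVec_diagonal, mul_comm]

theorem linearIndependent_col_monomialMatrix_of_add [Field K] [Fintype m] {W : Matrix m ι K}
    {j : ℕ} (e : ℕ) (hj : 0 < j) (h : LinearIndependent K (monomialMatrix W (j + e)).col) :
    LinearIndependent K (monomialMatrix W j).col := by
  classical
  cases isEmpty_or_nonempty ι with
  | inl _ =>
    obtain ⟨k, rfl⟩ := Nat.exists_eq_succ_of_ne_zero hj.ne'
    exact linearIndependent_empty_type
  | inr hι =>
    obtain ⟨z⟩ := hι
    have hinj : Function.Injective fun s : Sym ι j => s.append (Sym.replicate e z) :=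
      fun s s' hs => (Sym.append_inj_left _).mp hs
    refine LinearIndependent.of_comp (diagonal fun i => W i z ^ e).mulVecLin ?_
    simpa only [Function.comp_def, col_monomialMatrix_append, mulVecLin_apply] using h.comp _ hinj

theorem hadamardPow_mul_eq [Fintype ι] [DecidableEq ι] (U : Matrix m ι ℝ) (V : Matrix ι n ℝ)
    (j : ℕ) :
    hadamardPow (U * V) j = monomialMatrix U j *
      diagonal (fun s : Sym ι j => (s.1.countPerms : ℝ)) * (monomialMatrix Vᵀ j)ᵀ := by
  ext i q
  rw [mul_apply, hadamardPow, of_apply, mul_apply, Finset.sum_pow, Finset.sym_univ]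
  refine Finset.sum_congr rfl fun s _ => ?_
  simp only [mul_diagonal, monomialMatrix, of_apply, Multiset.prod_map_mul]
  rw [transpose_apply, of_apply, mul_comm _ (s.1.countPerms : ℝ), mul_assoc]
  rfl

theorem rank_hadamardPow_mul_eq_card_iff [Fintype m] [Fintype n] [Fintype ι] [DecidableEq ι]
    (U : Matrix m ι ℝ) (V : Matrix ι n ℝ) (j : ℕ) :
    (hadamardPow (U * V) j).rank = Fintype.card (Sym ι j) ↔
      LinearIndependent ℝ (monomialMatrix U j).col ∧
        LinearIndependent ℝ (monomialMatrix Vᵀ j).col := by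
  have hdet : (diagonal fun s : Sym ι j => (s.1.countPerms : ℝ)).det ≠ 0 := by
    rw [det_diagonal]
    exact Finset.prod_ne_zero_iff.mpr fun s _ => by exact_mod_cast s.1.countPerms_pos.ne'
  rw [hadamardPow_mul_eq, rank_mul_eq_card_iff, rank_mul_eq_left_of_det_ne_zero _ _ hdet,
    rank_transpose, rank_eq_card_width_iff_linearIndependent_col,
    rank_eq_card_width_iff_linearIndependent_col]

end Monomial

end Matrix

theorem rank_hadamardPow_eq_of_rank_eq_general (m n : ℕ) (A : Matrix (Fin m) (Fin n) ℝ)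
    (h : ℕ)
    (H : (hadamardPow A h).rank = (A.rank + h - 1).choose h) :
    ∀ j, 1 ≤ j → j ≤ h → (hadamardPow A j).rank = (A.rank + j - 1).choose j := by
  intro j hj hjh
  obtain ⟨e, rfl⟩ := Nat.exists_eq_add_of_le hjh
  obtain ⟨U, V, hUV⟩ := A.exists_rank_factorization
  have hchoose (k : ℕ) : (A.rank + k - 1).choose k = Fintype.card (Sym (Fin A.rank) k) := by
    rw [Sym.card_sym_eq_choose, Fintype.card_fin]
  have hfactor (k : ℕ) : hadamardPow A k = hadamardPow (U * V) k := by rw [hUV]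
  rw [hchoose, hfactor, rank_hadamardPow_mul_eq_card_iff] at H ⊢
  exact ⟨linearIndependent_col_monomialMatrix_of_add e hj H.1,
    linearIndependent_col_monomialMatrix_of_add e hj H.2⟩

/-- If the `h`-fold Hadamard power of a real matrix `A` of rank `r` has rank exactly
`C(r + h - 1, h)`, then for every `1 ≤ j ≤ h` the `j`-fold Hadamard power has rank
exactly `C(r + j - 1, j)`. -/
theorem rank_hadamardPow_eq_of_rank_eq (m n : ℕ) (A : Matrix (Fin m) (Fin n) ℝ)
    (h : ℕ) (hh : 1 ≤ h)
    (H : (hadamardPow A h).rank = (A.rank + h - 1).choose h) :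
    ∀ j, 1 ≤ j → j ≤ h → (hadamardPow A j).rank = (A.rank + j - 1).choose j :=
  rank_hadamardPow_eq_of_rank_eq_general m n A h H
end

section
/- Let X ⊂ S^{m-1} be a finite s-distance set, with inner product set A(X) of size s. Write the annihilator polynomial F_X(t) = ∏_{α∈A(X)} (t-α)/(1-α) in the Gegenbauer basis as F_X(t) = ∑_{k=0}^s f_k G_k(t). Then |X|(1 - |X| f_0) = ∑_{k=1}^s f_k ||Hₖᵀ H_0||², where ||N||² is the sum of squares of entries of N and H_k is the characteristic matrix of degree k. -/
open Polynomial Finset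
open scoped RealInnerProductSpace Classical

/-- `lamG m k = k / (m + 2k - 2)`, the coefficients in the Gegenbauer recurrence. -/
noncomputable def lamG (m k : ℕ) : ℝ := (k : ℝ) / ((m : ℝ) + 2 * k - 2)

/-- The Gegenbauer polynomials for `S^{m-1}`, normalized so that `geg m k` has value
`dim Harm_k(ℝ^m)` at `1`: `G_0 = 1`, `G_1 = m X`, and
`X * G_k = lamG (k+1) • G_{k+1} + (1 - lamG (k-1)) • G_{k-1}`. -/
noncomputable def geg (m : ℕ) : ℕ → Polynomial ℝ
  | 0 => 1
  | 1 => Polynomial.C (m : ℝ) * Polynomial.X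
  | (k + 2) => (lamG m (k + 2))⁻¹ •
      (Polynomial.X * geg m (k + 1) - (1 - lamG m k) • geg m k)

/-- The set of inner products between distinct points of `X`. -/
noncomputable def innerSet (m : ℕ) (X : Finset (EuclideanSpace ℝ (Fin m))) : Finset ℝ :=
  ((X ×ˢ X).filter fun p => p.1 ≠ p.2).image fun p => ⟪p.1, p.2⟫

/-- `X` is a spherical `t`-design iff `∑_{x,y ∈ X} G_i(⟨x,y⟩) = 0` for `1 ≤ i ≤ t`. -/
noncomputable def IsGegDesign (m t : ℕ) (X : Finset (EuclideanSpace ℝ (Fin m))) : Prop :=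
  ∀ i : ℕ, 1 ≤ i → i ≤ t → ∑ x ∈ X, ∑ y ∈ X, (geg m i).eval ⟪x, y⟫ = 0

/-- `hdim m k = dim Harm_k(ℝ^m) = C(m+k-1, k) - C(m+k-3, k-2)`. -/
def hdim (m k : ℕ) : ℕ :=
  (m + k - 1).choose k - if 2 ≤ k then (m + k - 3).choose (k - 2) else 0

/-! Evaluate `∑_{x,y ∈ X} F_X(⟨x,y⟩)` in two ways. Since `F_X(1) = 1` and `F_X` vanishes on
`A(X)`, only the diagonal survives and the sum is `|X|`. Expanding `F_X = ∑ f_k G_k` instead,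
`G_0 = 1` contributes `f_0 |X|²`, and by the addition formula the `k`-th term is
`f_k ∑_i (∑_x φ_{k,i}(x))² = f_k ‖Hₖᵀ H_0‖²`. -/

noncomputable def annihilatorPoly (A : Finset ℝ) : ℝ[X] :=
  ∏ α ∈ A, (1 - α)⁻¹ • (X - C α)

lemma eval_annihilatorPoly (A : Finset ℝ) (t : ℝ) :
    (annihilatorPoly A).eval t = ∏ α ∈ A, (1 - α)⁻¹ * (t - α) := by
  simp [annihilatorPoly, eval_prod]

lemma eval_annihilatorPoly_one {A : Finset ℝ} (hA : (1 : ℝ) ∉ A) :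
    (annihilatorPoly A).eval 1 = 1 := by
  rw [eval_annihilatorPoly]
  refine prod_eq_one fun α hα => inv_mul_cancel₀ (sub_ne_zero.mpr ?_)
  rintro rfl
  exact hA hα

lemma eval_annihilatorPoly_of_mem {A : Finset ℝ} {t : ℝ} (ht : t ∈ A) :
    (annihilatorPoly A).eval t = 0 := by
  rw [eval_annihilatorPoly]
  exact prod_eq_zero ht (by rw [sub_self, mul_zero])

section InnerProductSpace

variable {E : Type*} [NormedAddCommGroup E] [InnerProductSpace ℝ E]

lemma sum_sum_eval_inner_eq_card {X : Finset E} (hX : ∀ x ∈ X, ‖x‖ = 1) {P : ℝ[X]}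
    (hP₁ : P.eval 1 = 1) (hP₀ : ∀ x ∈ X, ∀ y ∈ X, x ≠ y → P.eval ⟪x, y⟫ = 0) :
    ∑ x ∈ X, ∑ y ∈ X, P.eval ⟪x, y⟫ = X.card := by
  have hrow : ∀ x ∈ X, ∑ y ∈ X, P.eval ⟪x, y⟫ = 1 := fun x hx => by
    rw [sum_eq_single_of_mem x hx fun y hy hyx => hP₀ x hx y hy hyx.symm,
      real_inner_self_eq_norm_sq, hX x hx, one_pow, hP₁]
  rw [sum_congr rfl hrow, sum_const, nsmul_one]

lemma sum_sum_eval_geg_zero (m : ℕ) (X : Finset E) :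
    ∑ x ∈ X, ∑ y ∈ X, (geg m 0).eval ⟪x, y⟫ = (X.card : ℝ) ^ 2 := by
  simp [geg, sq]

end InnerProductSpace

section innerSet

variable {m : ℕ} {X : Finset (EuclideanSpace ℝ (Fin m))}

lemma inner_mem_innerSet {x y : EuclideanSpace ℝ (Fin m)} (hx : x ∈ X) (hy : y ∈ X)
    (hxy : x ≠ y) : ⟪x, y⟫ ∈ innerSet m X :=
  mem_image.mpr ⟨(x, y), mem_filter.mpr ⟨mem_product.mpr ⟨hx, hy⟩, hxy⟩, rfl⟩

lemma one_notMem_innerSet (hX : ∀ x ∈ X, ‖x‖ = 1) : (1 : ℝ) ∉ innerSet m X := by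
  simp only [innerSet, mem_image, mem_filter, mem_product, not_exists, not_and]
  rintro ⟨x, y⟩ ⟨⟨hx, hy⟩, hxy⟩ h
  exact hxy ((inner_eq_one_iff_of_norm_eq_one (hX x hx) (hX y hy)).mp h)

lemma sum_sum_eval_annihilatorPoly_innerSet (hX : ∀ x ∈ X, ‖x‖ = 1) :
    ∑ x ∈ X, ∑ y ∈ X, (annihilatorPoly (innerSet m X)).eval ⟪x, y⟫ = X.card :=
  sum_sum_eval_inner_eq_card hX (eval_annihilatorPoly_one (one_notMem_innerSet hX))
    fun _ hx _ hy hxy => eval_annihilatorPoly_of_mem (inner_mem_innerSet hx hy hxy)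

end innerSet

section Semiring

variable {R α ι : Type*}

lemma sum_sum_eval_sum_smul [CommSemiring R] (X : Finset α) (g : α → α → R) (f : ℕ → R)
    (G : ℕ → R[X]) (n : ℕ) :
    ∑ x ∈ X, ∑ y ∈ X, (∑ k ∈ range n, f k • G k).eval (g x y) =
      ∑ k ∈ range n, f k * ∑ x ∈ X, ∑ y ∈ X, (G k).eval (g x y) := by
  simp only [eval_finsetSum, eval_smul, smul_eq_mul, mul_sum]
  rw [eq_comm, Finset.sum_comm]
  exact Finset.sum_congr rfl fun _ _ => Finset.sum_comm

lemma sum_sum_sum_mul_eq_sum_sq [CommSemiring R] [Fintype ι] (X : Finset α) (ψ : ι → α → R) :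
    ∑ x ∈ X, ∑ y ∈ X, ∑ i, ψ i x * ψ i y = ∑ i, (∑ x ∈ X, ψ i x) ^ 2 := by
  simp only [sq, sum_mul_sum]
  rw [eq_comm, Finset.sum_comm]
  exact Finset.sum_congr rfl fun _ _ => Finset.sum_comm

lemma sum_sq_transpose_mul_of_forall_eq_one [Semiring R] {ν : Type*} [Fintype α] [Fintype ι]
    [Fintype ν] (hν : Fintype.card ν = 1) (M : Matrix α ι R) (N : Matrix α ν R)
    (hN : ∀ x j, N x j = 1) :
    ∑ i, ∑ j, (M.transpose * N) i j ^ 2 = ∑ i, (∑ x, M x i) ^ 2 := by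
  simp [Matrix.mul_apply, hN, hν]

end Semiring

theorem dgs_identity_general (m s : ℕ)
    (X : Finset (EuclideanSpace ℝ (Fin m))) (hX : ∀ x ∈ X, ‖x‖ = 1)
    (d : ℕ → ℕ) (φ : (k : ℕ) → Fin (d k) → EuclideanSpace ℝ (Fin m) → ℝ)
    (haddition : ∀ k ≤ s, ∀ x ∈ X, ∀ y ∈ X,
      (geg m k).eval ⟪x, y⟫ = ∑ i : Fin (d k), φ k i x * φ k i y)
    (hd0 : d 0 = 1) (hφ0 : ∀ i x, φ 0 i x = 1)
    (H : (k : ℕ) → Matrix ↥X (Fin (d k)) ℝ)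
    (hH : ∀ k, H k = Matrix.of fun (x : ↥X) i => φ k i (x : EuclideanSpace ℝ (Fin m)))
    (f : ℕ → ℝ)
    (hF : (∏ α ∈ innerSet m X, (1 - α)⁻¹ • (Polynomial.X - Polynomial.C α)) =
      ∑ k ∈ Finset.range (s + 1), f k • geg m k) :
    (X.card : ℝ) * (1 - (X.card : ℝ) * f 0) =
      ∑ k ∈ Finset.Icc 1 s, f k *
        (∑ i : Fin (d k), ∑ j : Fin (d 0), (((H k).transpose * (H 0)) i j) ^ 2) := by
  set T : ℕ → ℝ := fun k => ∑ x ∈ X, ∑ y ∈ X, (geg m k).eval ⟪x, y⟫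
  have hcount : (X.card : ℝ) = ∑ k ∈ range (s + 1), f k * T k := by
    rw [← sum_sum_eval_annihilatorPoly_innerSet hX, annihilatorPoly, hF, sum_sum_eval_sum_smul]
  have hT : ∀ k ∈ Icc 1 s, T k = ∑ i, ∑ j, ((H k).transpose * H 0) i j ^ 2 := by
    intro k hk
    rw [sum_sq_transpose_mul_of_forall_eq_one (by simp [hd0]) _ _ (by simp [hH, hφ0])]
    simp only [T, hH, Matrix.of_apply, sum_coe_sort X, ← sum_sum_sum_mul_eq_sum_sq]
    exact sum_congr rfl fun x hx => sum_congr rfl fun y hy =>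
      haddition k (mem_Icc.mp hk).2 x hx y hy
  have hT0 : T 0 = (X.card : ℝ) ^ 2 := sum_sum_eval_geg_zero m X
  rw [sum_range_eq_add_Ico _ (by positivity), Ico_add_one_right_eq_Icc, hT0] at hcount
  rw [← sum_congr rfl fun k hk => congrArg (f k * ·) (hT k hk)]
  linear_combination hcount

/-- Delsarte–Goethals–Seidel identity: for a finite `s`-distance set `X ⊆ S^{m-1}` with
annihilator polynomial `F_X = ∏_{α ∈ A(X)} (t-α)/(1-α) = ∑_{k=0}^s f k • G_k`, and
characteristic matrices `H k` built from functions `φ k` satisfying the addition formula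
`G_k(⟨x,y⟩) = ∑_i φ_{k,i}(x) φ_{k,i}(y)` (with `H 0` the all-ones column), one has
`|X| (1 - |X| f_0) = ∑_{k=1}^s f k ‖Hₖᵀ H_0‖²`. -/
theorem dgs_identity (m s : ℕ)
    (X : Finset (EuclideanSpace ℝ (Fin m))) (hX : ∀ x ∈ X, ‖x‖ = 1)
    (hdist : (innerSet m X).card = s)
    (d : ℕ → ℕ) (φ : (k : ℕ) → Fin (d k) → EuclideanSpace ℝ (Fin m) → ℝ)
    (haddition : ∀ k ≤ s, ∀ x ∈ X, ∀ y ∈ X,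
      (geg m k).eval ⟪x, y⟫ = ∑ i : Fin (d k), φ k i x * φ k i y)
    (hd0 : d 0 = 1) (hφ0 : ∀ i x, φ 0 i x = 1)
    (H : (k : ℕ) → Matrix ↥X (Fin (d k)) ℝ)
    (hH : ∀ k, H k = Matrix.of fun (x : ↥X) i => φ k i (x : EuclideanSpace ℝ (Fin m)))
    (f : ℕ → ℝ)
    (hF : (∏ α ∈ innerSet m X, (1 - α)⁻¹ • (Polynomial.X - Polynomial.C α)) =
      ∑ k ∈ Finset.range (s + 1), f k • geg m k) :
    (X.card : ℝ) * (1 - (X.card : ℝ) * f 0) =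
      ∑ k ∈ Finset.Icc 1 s, f k *
        (∑ i : Fin (d k), ∑ j : Fin (d 0), (((H k).transpose * (H 0)) i j) ^ 2) :=
  dgs_identity_general m s X hX d φ haddition hd0 hφ0 H hH f hF
end

section
/- Let (X, R) be an s-class Q-polynomial association scheme with m = rank(E_1) which is Q-bipartite, i.e., q_{1,i}^i = 0 for all 0 ≤ i ≤ s. Then |X| ≤ 2·C(m+s-2, s-1). -/
open Matrix Finset

/-- The all-ones matrix. -/
def allOnes (X : Type*) : Matrix X X ℝ := Matrix.of fun _ _ => (1 : ℝ)

section

variable {X : Type*} [Fintype X] [DecidableEq X]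

/-- `A 0, …, A s` are the adjacency matrices of a symmetric association scheme of
class `s` on `X`. -/
structure IsAssocScheme (s : ℕ) (A : ℕ → Matrix X X ℝ) : Prop where
  zero_one : ∀ i ≤ s, ∀ x y, A i x y = 0 ∨ A i x y = 1
  nonempty : ∀ i ≤ s, A i ≠ 0
  eq_one : A 0 = 1
  sum_eq : ∑ i ∈ Finset.range (s + 1), A i = allOnes X
  symm : ∀ i ≤ s, (A i)ᵀ = A i
  mul_closed : ∀ i ≤ s, ∀ j ≤ s, ∃ p : ℕ → ℝ,
    A i * A j = ∑ k ∈ Finset.range (s + 1), p k • A k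

/-- `E 0, …, E s` are the primitive idempotents of the scheme, with
`E 0 = |X|⁻¹ J`. -/
structure IsPrimIdem (s : ℕ) (A E : ℕ → Matrix X X ℝ) : Prop where
  symm : ∀ i ≤ s, (E i).IsSymm
  mem_span : ∀ i ≤ s, ∃ q : ℕ → ℝ, E i = ∑ k ∈ Finset.range (s + 1), q k • A k
  orth_idem : ∀ i ≤ s, ∀ j ≤ s, E i * E j = if i = j then E i else 0
  sum_eq : ∑ i ∈ Finset.range (s + 1), E i = 1
  zero_eq : E 0 = (Fintype.card X : ℝ)⁻¹ • allOnes X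

/-- `q` is the family of Krein parameters:
`E i ∘ E j = |X|⁻¹ ∑_k q i j k • E k` (entrywise product). -/
def IsKrein (s : ℕ) (E : ℕ → Matrix X X ℝ) (q : ℕ → ℕ → ℕ → ℝ) : Prop :=
  ∀ i ≤ s, ∀ j ≤ s, Matrix.hadamard (E i) (E j) =
    (Fintype.card X : ℝ)⁻¹ • ∑ k ∈ Finset.range (s + 1), q i j k • E k

/-- The scheme is `Q`-polynomial with respect to the ordering `E 0, …, E s`:
`q 1 j k > 0` for `k = j ± 1` and `q 1 j k = 0` for `|k - j| > 1`. -/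
def IsQPoly (s : ℕ) (q : ℕ → ℕ → ℕ → ℝ) : Prop :=
  (∀ j ≤ s, ∀ k ≤ s, (k = j + 1 ∨ j = k + 1) → 0 < q 1 j k) ∧
  (∀ j ≤ s, ∀ k ≤ s, (j + 1 < k ∨ k + 1 < j) → q 1 j k = 0)

end

/-!
Write `E₁ = ∑ θ k • A k`. The Gram vectors of `E₁`, rescaled by `(θ 0)^(-1/2)`, put `X` on the
unit sphere of `ℝ^m`, `m = rank E₁`, with inner products `θ k / θ 0`. Since `q¹ⱼⱼ = 0`, the
Krein relations read `E₁ ∘ Eⱼ = |X|⁻¹ (q¹ⱼ,ⱼ₋₁ Eⱼ₋₁ + q¹ⱼ,ⱼ₊₁ Eⱼ₊₁)`, so entrywise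
`Eⱼ = Φⱼ(E₁)` for polynomials `Φⱼ` of degree `j` and parity `j`. As the `Eⱼ` are nonzero (their
traces are positive by Krein symmetry) they span the `A k`, so the values of `E₁` separate the
classes. The relation for `E₁ ∘ Eₛ` then makes the `s + 1` distinct values `θ k` all the roots
of a polynomial of degree and parity `s + 1`, so they are symmetric under `t ↦ -t`: the embedded
set is antipodal, with `s - 1` inner products `β ≠ ±1`. On a set `Y` of representatives of the
antipodal pairs, the functions `w ↦ ∏_β (⟨z, w⟩ - β)` are multiples of delta functions and, by
parity, restrictions of homogeneous polynomials of degree `s - 1`, whence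
`|X| = 2 |Y| ≤ 2 C(m + s - 2, s - 1)`.
-/

namespace Polynomial

section Parity

variable {R : Type*} [CommRing R] {p q : R[X]} {m n : ℕ}

def HasParity (p : R[X]) (n : ℕ) : Prop := p.comp (-X) = (-1 : R) ^ n • p

lemma hasParity_C (a : R) : (C a).HasParity 0 := by
  simp [HasParity]

lemma hasParity_X : (X : R[X]).HasParity 1 := by
  simp [HasParity]

lemma HasParity.mul (hp : p.HasParity m) (hq : q.HasParity n) : (p * q).HasParity (m + n) := by
  rw [HasParity, mul_comp, hp, hq, smul_mul_smul_comm, pow_add]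

lemma HasParity.sub (hp : p.HasParity n) (hq : q.HasParity n) : (p - q).HasParity n := by
  rw [HasParity, sub_comp, hp, hq, smul_sub]

lemma HasParity.add_two (hp : p.HasParity n) : p.HasParity (n + 2) := by
  rwa [HasParity, pow_add, neg_one_sq, mul_one]

lemma HasParity.eval_neg (hp : p.HasParity n) (t : R) : p.eval (-t) = (-1) ^ n * p.eval t := by
  simpa using congrArg (eval t) hp

lemma hasParity_prod_X_sub_C {B : Finset R} (hB : ∀ β ∈ B, -β ∈ B) :
    (∏ β ∈ B, (X - C β)).HasParity B.card := by
  have hneg : ∏ β ∈ B, (X - C (-β)) = ∏ β ∈ B, (X - C β) :=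
    prod_nbij' (fun β => -β) (fun β => -β) hB hB (by simp) (by simp) (by simp)
  have hfactor : ∀ β : R, (X - C β).comp (-X) = (-1 : R) • (X - C (-β)) := fun β => by
    rw [neg_one_smul]
    simp only [sub_comp, X_comp, C_comp, map_neg]
    ring
  rw [HasParity, prod_comp, ← hneg, Finset.smul_prod]
  exact prod_congr rfl fun β _ => hfactor β

lemma HasParity.coeff_eq_zero [NoZeroDivisors R] [CharZero R] (hp : p.HasParity n) {k : ℕ}
    (hk : k % 2 ≠ n % 2) : p.coeff k = 0 := by
  have h := congrArg (coeff · k) hp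
  simp only [show (-X : R[X]) = C (-1) * X by simp, comp_C_mul_X_coeff, coeff_smul,
    smul_eq_mul] at h
  rw [neg_one_pow_eq_pow_mod_two (n := k), neg_one_pow_eq_pow_mod_two (n := n)] at h
  rcases Nat.mod_two_eq_zero_or_one n with hn | hn <;>
    rw [show k % 2 = 1 - n % 2 by omega, hn] at h <;>
    simpa [CharZero.eq_neg_self_iff, CharZero.neg_eq_self_iff] using h

lemma HasParity.neg_mem_of_isRoot [IsDomain R] (hp : p.HasParity n) (hp0 : p ≠ 0)
    {S : Finset R} (hS : ∀ t ∈ S, p.IsRoot t) (hdeg : p.natDegree ≤ S.card) {t : R}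
    (ht : t ∈ S) : -t ∈ S := by
  classical
  have hsub : S ⊆ p.roots.toFinset := fun t ht => by simpa [hp0] using hS t ht
  have hcard : p.roots.toFinset.card ≤ S.card :=
    (Multiset.toFinset_card_le _).trans ((card_roots' p).trans hdeg)
  rw [eq_of_subset_of_card_le hsub hcard]
  simpa [hp0, IsRoot, hp.eval_neg] using hS t ht

end Parity

end Polynomial

section HomogeneousFunctions

variable {R Z ι : Type*} [CommRing R]

def symMonomial (c : Z → ι → R) {k : ℕ} (μ : Sym ι k) (z : Z) : R :=
  ((μ : Multiset ι).map (c z)).prod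

lemma symMonomial_cons (c : Z → ι → R) {k : ℕ} (i : ι) (μ : Sym ι k) :
    symMonomial c (i ::ₛ μ) = (fun z => c z i) * symMonomial c μ := by
  ext z
  simp [symMonomial, Sym.coe_cons]

/-- The restrictions to the points `c z` of the homogeneous polynomials of degree `k`. -/
def homogeneousFunctions (c : Z → ι → R) (k : ℕ) : Submodule R (Z → R) :=
  Submodule.span R (Set.range (symMonomial c (k := k)))

variable [Fintype ι] {c : Z → ι → R}

lemma dotProduct_mul_mem_homogeneousFunctions (v : ι → R) {k : ℕ} {g : Z → R}
    (hg : g ∈ homogeneousFunctions c k) :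
    (fun z => v ⬝ᵥ c z) * g ∈ homogeneousFunctions c (k + 1) := by
  suffices homogeneousFunctions c k ≤
      (homogeneousFunctions c (k + 1)).comap (LinearMap.mulLeft R fun z => v ⬝ᵥ c z) from this hg
  refine Submodule.span_le.mpr ?_
  rintro _ ⟨μ, rfl⟩
  have h : (fun z => v ⬝ᵥ c z) * symMonomial c μ = ∑ i, v i • symMonomial c (i ::ₛ μ) := by
    ext z
    simp [symMonomial_cons, dotProduct, Finset.sum_mul, mul_assoc]
  simp only [SetLike.mem_coe, Submodule.mem_comap, LinearMap.mulLeft_apply, h]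
  exact Submodule.sum_mem _ fun i _ => Submodule.smul_mem _ _ (Submodule.subset_span ⟨_, rfl⟩)

lemma pow_dotProduct_mem_homogeneousFunctions (v : ι → R) (k : ℕ) :
    (fun z => v ⬝ᵥ c z) ^ k ∈ homogeneousFunctions c k := by
  induction k with
  | zero => exact Submodule.subset_span ⟨Sym.nil, by ext; simp [symMonomial]⟩
  | succ k ih => simpa [pow_succ'] using dotProduct_mul_mem_homogeneousFunctions v ih

lemma homogeneousFunctions_le_add_two (hc : ∀ z, c z ⬝ᵥ c z = 1) (k : ℕ) :
    homogeneousFunctions c k ≤ homogeneousFunctions c (k + 2) := by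
  refine Submodule.span_le.mpr ?_
  rintro _ ⟨μ, rfl⟩
  have h : symMonomial c μ = ∑ i, symMonomial c (i ::ₛ i ::ₛ μ) := by
    ext z
    simp only [symMonomial_cons, Finset.sum_apply, Pi.mul_apply, ← mul_assoc, ← Finset.sum_mul]
    rw [← dotProduct, hc, one_mul]
  rw [SetLike.mem_coe, h]
  exact Submodule.sum_mem _ fun i _ => Submodule.subset_span ⟨_, rfl⟩

lemma pow_dotProduct_mem_homogeneousFunctions_of_le (hc : ∀ z, c z ⬝ᵥ c z = 1) (v : ι → R)
    {k K : ℕ} (hkK : k ≤ K) (hpar : k % 2 = K % 2) :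
    (fun z => v ⬝ᵥ c z) ^ k ∈ homogeneousFunctions c K := by
  obtain ⟨j, rfl⟩ : ∃ j, K = k + 2 * j := ⟨(K - k) / 2, by omega⟩
  induction j with
  | zero => exact pow_dotProduct_mem_homogeneousFunctions v k
  | succ j ih => exact homogeneousFunctions_le_add_two hc _ (ih (by omega) (by omega))

lemma eval_dotProduct_mem_homogeneousFunctions [NoZeroDivisors R] [CharZero R]
    (hc : ∀ z, c z ⬝ᵥ c z = 1) (v : ι → R) {p : Polynomial R} {K : ℕ}
    (hpar : p.HasParity K) (hdeg : p.natDegree ≤ K) :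
    (fun z => p.eval (v ⬝ᵥ c z)) ∈ homogeneousFunctions c K := by
  have h : (fun z => p.eval (v ⬝ᵥ c z)) =
      ∑ k ∈ range (K + 1), p.coeff k • (fun z => v ⬝ᵥ c z) ^ k := by
    ext z
    simp [Polynomial.eval_eq_sum_range' (Nat.lt_succ_of_le hdeg)]
  rw [h]
  refine Submodule.sum_mem _ fun k hk => ?_
  by_cases hpk : k % 2 = K % 2
  · exact Submodule.smul_mem _ _ <| pow_dotProduct_mem_homogeneousFunctions_of_le hc v
      (Nat.lt_succ_iff.mp (mem_range.mp hk)) hpk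
  · simp [hpar.coeff_eq_zero hpk]

end HomogeneousFunctions

lemma Function.Involutive.exists_card_eq_two_mul {X : Type*} [Fintype X] {f : X → X}
    (hf : f.Involutive) (hfix : ∀ x, f x ≠ x) :
    ∃ Y : Finset X, Fintype.card X = 2 * Y.card ∧ ∀ x ∈ Y, f x ∉ Y := by
  classical
  let e := Fintype.equivFin X
  have hswap : univ.filter (fun x => ¬ e x < e (f x)) =
      (univ.filter fun x => e x < e (f x)).image f := by
    ext x
    simp only [mem_filter, mem_univ, true_and, mem_image, not_lt]
    refine ⟨fun h => ⟨f x, ?_, hf x⟩, ?_⟩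
    · rw [hf x]
      exact h.lt_of_ne fun h' => hfix x (e.injective h')
    · rintro ⟨y, hy, rfl⟩
      rw [hf y]
      exact hy.le
  refine ⟨univ.filter fun x => e x < e (f x), ?_, fun x hx => ?_⟩
  · have h := card_filter_add_card_filter_not (s := univ) fun x => e x < e (f x)
    rw [hswap, card_image_of_injective _ hf.injective, card_univ] at h
    omega
  · simp only [mem_filter, mem_univ, true_and, hf x, not_lt] at hx ⊢
    exact hx.le

section SphericalCode

open Polynomial

variable {R Z ι : Type*} [Field R] [Fintype ι]

lemma finrank_homogeneousFunctions_le [DecidableEq ι] (c : Z → ι → R) (k : ℕ) :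
    Module.finrank R (homogeneousFunctions c k) ≤ (Fintype.card ι).multichoose k :=
  (finrank_range_le_card _).trans (Sym.card_sym_eq_multichoose ι k).le

theorem card_le_multichoose_of_dotProduct_mem [Fintype Z] [DecidableEq ι] [CharZero R]
    (c : Z → ι → R) (hc : ∀ z, c z ⬝ᵥ c z = 1) {B : Finset R} (hB : ∀ β ∈ B, -β ∈ B)
    (h1 : 1 ∉ B) (hcB : ∀ z w, z ≠ w → c z ⬝ᵥ c w ∈ B) :
    Fintype.card Z ≤ (Fintype.card ι).multichoose B.card := by
  classical
  set P : R[X] := ∏ β ∈ B, (X - C β)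
  have hP1 : P.eval 1 ≠ 0 := by
    simp only [P, eval_prod, eval_sub, eval_X, eval_C, prod_ne_zero_iff, sub_ne_zero]
    exact fun β hβ h => h1 (h ▸ hβ)
  have hsingle : ∀ z, Pi.single z 1 ∈ homogeneousFunctions c B.card := fun z => by
    have hf : (fun w => P.eval (c z ⬝ᵥ c w)) = P.eval 1 • Pi.single z 1 := by
      ext w
      rcases eq_or_ne z w with rfl | hzw
      · simp [hc]
      · simp [hzw.symm, P, eval_prod, prod_eq_zero (hcB z w hzw)]
    have hmem := eval_dotProduct_mem_homogeneousFunctions hc (c z) (hasParity_prod_X_sub_C hB)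
      (natDegree_finsetProd_X_sub_C_eq_card B id).le
    rw [hf] at hmem
    simpa [hP1] using Submodule.smul_mem _ (P.eval 1)⁻¹ hmem
  have htop : homogeneousFunctions c B.card = ⊤ := by
    refine eq_top_iff.mpr ((Pi.basisFun R Z).span_eq.symm.le.trans (Submodule.span_le.mpr ?_))
    rintro _ ⟨z, rfl⟩
    simpa using hsingle z
  calc Fintype.card Z = Module.finrank R (homogeneousFunctions c B.card) := by
        rw [htop, finrank_top, Module.finrank_fintype_fun_eq_card]
    _ ≤ _ := finrank_homogeneousFunctions_le c B.card

variable [LinearOrder R] [IsStrictOrderedRing R]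

lemma eq_neg_of_dotProduct_eq_neg_one {u v : ι → R} (hu : u ⬝ᵥ u = 1) (hv : v ⬝ᵥ v = 1)
    (huv : u ⬝ᵥ v = -1) : v = -u := by
  have h : (u + v) ⬝ᵥ (u + v) = 0 := by
    simp only [add_dotProduct, dotProduct_add, hu, hv, huv, dotProduct_comm v u]
    norm_num
  exact eq_neg_of_add_eq_zero_right (dotProduct_self_eq_zero.mp h)

theorem card_le_two_mul_multichoose_of_antipodal {X : Type*} [Fintype X] [DecidableEq ι]
    (c : X → ι → R) (hc : ∀ x, c x ⬝ᵥ c x = 1) {D : Finset R} (hD : ∀ δ ∈ D, -δ ∈ D)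
    (hcD : ∀ x y, c x ⬝ᵥ c y ∈ D) (heq : ∀ x y, c x ⬝ᵥ c y = 1 → x = y)
    (hanti : ∀ x, ∃ y, c x ⬝ᵥ c y = -1) :
    Fintype.card X ≤ 2 * (Fintype.card ι).multichoose (D.card - 2) := by
  classical
  rcases isEmpty_or_nonempty X with hX | ⟨⟨x₀⟩⟩
  · simp
  choose a ha using hanti
  have hca : ∀ x, c (a x) = -c x := fun x => eq_neg_of_dotProduct_eq_neg_one (hc x) (hc _) (ha x)
  have hc_inj : c.Injective := fun x y hxy => heq x y (by rw [hxy, hc])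
  have ha_invol : a.Involutive := fun x => hc_inj (by rw [hca, hca, neg_neg])
  have ha_ne : ∀ x, a x ≠ x := fun x hx => by
    have h := ha x
    rw [hx, hc] at h
    norm_num at h
  obtain ⟨Y, hcard, hY⟩ := ha_invol.exists_card_eq_two_mul ha_ne
  set B := (D.erase 1).erase (-1)
  have h1D : 1 ∈ D := hc x₀ ▸ hcD x₀ x₀
  have hBcard : B.card = D.card - 2 := by
    rw [card_erase_of_mem (mem_erase.mpr ⟨by norm_num, hD 1 h1D⟩), card_erase_of_mem h1D]
    omega
  have hB : ∀ β ∈ B, -β ∈ B := fun β hβ => by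
    simp only [B, mem_erase] at hβ ⊢
    exact ⟨fun h => hβ.2.1 (by linarith), fun h => hβ.1 (by linarith), hD β hβ.2.2⟩
  have hYB : ∀ z w : Y, z ≠ w → c z ⬝ᵥ c w ∈ B := fun z w hzw => by
    refine mem_erase.mpr ⟨fun h => ?_,
      mem_erase.mpr ⟨fun h => hzw (Subtype.ext (heq _ _ h)), hcD _ _⟩⟩
    have hw : (w : X) = a z :=
      hc_inj (by rw [hca, eq_neg_of_dotProduct_eq_neg_one (hc _) (hc _) h])
    exact hY z z.2 (hw ▸ w.2)
  have hbound := card_le_multichoose_of_dotProduct_mem (fun z : Y => c z) (fun z => hc z) hB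
    (by simp [B]) hYB
  rw [hcard, ← hBcard]
  simpa using Nat.mul_le_mul_left 2 hbound

end SphericalCode

lemma exists_dotProduct_eq_inner {X F : Type*} [Finite X] [NormedAddCommGroup F]
    [InnerProductSpace ℝ F] (u : X → F) {m : ℕ}
    (hm : Module.finrank ℝ (Submodule.span ℝ (Set.range u)) = m) :
    ∃ c : X → Fin m → ℝ, ∀ x y, c x ⬝ᵥ c y = inner ℝ (u x) (u y) := by
  have := FiniteDimensional.span_of_finite ℝ (Set.finite_range u)
  let b := (stdOrthonormalBasis ℝ (Submodule.span ℝ (Set.range u))).reindex (finCongr hm)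
  refine ⟨fun x => (b.repr ⟨u x, Submodule.subset_span ⟨x, rfl⟩⟩).ofLp, fun x y => ?_⟩
  have h := b.repr.inner_map_map ⟨u x, Submodule.subset_span ⟨x, rfl⟩⟩
    ⟨u y, Submodule.subset_span ⟨y, rfl⟩⟩
  rwa [EuclideanSpace.inner_eq_star_dotProduct, star_trivial, dotProduct_comm,
    Submodule.coe_inner] at h

lemma Matrix.IsSymm.exists_dotProduct_eq {X : Type*} [Fintype X] {M : Matrix X X ℝ}
    (hM : M.IsSymm) (hidem : M * M = M) :
    ∃ c : X → Fin M.rank → ℝ, ∀ x y, c x ⬝ᵥ c y = M x y := by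
  let u : X → EuclideanSpace ℝ X := fun x => WithLp.toLp 2 (M.col x)
  have hspan : Submodule.span ℝ (Set.range u) = (Submodule.span ℝ (Set.range M.col)).map
      ((EuclideanSpace.equiv X ℝ).symm.toLinearEquiv : (X → ℝ) →ₗ[ℝ] EuclideanSpace ℝ X) := by
    rw [Submodule.map_span, ← Set.range_comp]
    rfl
  obtain ⟨c, hc⟩ := exists_dotProduct_eq_inner u (m := M.rank) <| by
    rw [hspan, LinearEquiv.finrank_map_eq, rank_eq_finrank_span_cols]
  refine ⟨c, fun x y => ?_⟩
  rw [hc, EuclideanSpace.inner_toLp_toLp, star_trivial]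
  conv_rhs => rw [← hidem, mul_apply]
  exact sum_congr rfl fun z _ => by rw [col_apply, col_apply, hM.apply z x, mul_comm]

open Polynomial

section KreinPoly

variable {K : Type*} [Field K]

/-- `kreinPoly n b c (j + 2)` is `Φⱼ₊₂` solved from `t Φⱼ₊₁ = n⁻¹ (c (j+1) Φⱼ + b (j+1) Φⱼ₊₂)`,
the entrywise form of the Krein relation for `E₁ ∘ Eⱼ₊₁` with `n = |X|`. -/
noncomputable def kreinPoly (n : K) (b c : ℕ → K) : ℕ → K[X]
  | 0 => C n⁻¹
  | 1 => X
  | j + 2 => C (n / b (j + 1)) * X * kreinPoly n b c (j + 1) -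
      C (c (j + 1) / b (j + 1)) * kreinPoly n b c j

variable (n : K) (b c : ℕ → K)

lemma hasParity_kreinPoly : ∀ j, (kreinPoly n b c j).HasParity j
  | 0 => hasParity_C _
  | 1 => hasParity_X
  | j + 2 => by
    rw [kreinPoly]
    refine HasParity.sub ?_ ?_
    · simpa [add_comm, add_left_comm] using
        ((hasParity_C _).mul hasParity_X).mul (hasParity_kreinPoly (j + 1))
    · simpa using ((hasParity_C _).mul (hasParity_kreinPoly j)).add_two

lemma natDegree_kreinPoly {N : ℕ} (hn : n ≠ 0) (hb : ∀ j, j + 2 ≤ N → b (j + 1) ≠ 0) :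
    ∀ j ≤ N, (kreinPoly n b c j).natDegree = j
  | 0, _ => natDegree_C _
  | 1, _ => natDegree_X
  | j + 2, hj => by
    have h1 := natDegree_kreinPoly hn hb (j + 1) (by omega)
    have h0 := natDegree_kreinPoly hn hb j (by omega)
    have hne : kreinPoly n b c (j + 1) ≠ 0 := ne_zero_of_natDegree_gt (n := 0) (by omega)
    have hlead : (C (n / b (j + 1)) * X * kreinPoly n b c (j + 1)).natDegree = j + 2 := by
      rw [mul_assoc, natDegree_C_mul (div_ne_zero hn (hb j hj)), natDegree_X_mul hne, h1]
    have hlow : (C (c (j + 1) / b (j + 1)) * kreinPoly n b c j).natDegree < j + 2 :=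
      (natDegree_C_mul_le _ _).trans_lt (by omega)
    rw [kreinPoly, natDegree_sub_eq_left_of_natDegree_lt (hlead ▸ hlow), hlead]

lemma eval_kreinPoly {N : ℕ} {f : ℕ → K} {t : K} (hn : n ≠ 0)
    (hb : ∀ j, j + 2 ≤ N → b (j + 1) ≠ 0) (h0 : f 0 = n⁻¹) (h1 : f 1 = t)
    (hrec : ∀ j, j + 2 ≤ N → t * f (j + 1) = n⁻¹ * (c (j + 1) * f j + b (j + 1) * f (j + 2))) :
    ∀ j ≤ N, f j = (kreinPoly n b c j).eval t
  | 0, _ => by simp [kreinPoly, h0]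
  | 1, _ => by simp [kreinPoly, h1]
  | j + 2, hj => by
    have h := hrec j hj
    rw [eval_kreinPoly hn hb h0 h1 hrec (j + 1) (by omega),
      eval_kreinPoly hn hb h0 h1 hrec j (by omega)] at h
    simp only [kreinPoly, eval_sub, eval_mul, eval_C, eval_X]
    field_simp [hb j hj] at h ⊢
    linear_combination -h

lemma natDegree_X_mul_kreinPoly_sub {N : ℕ} (hN : 1 ≤ N) (hn : n ≠ 0)
    (hb : ∀ j, j + 2 ≤ N → b (j + 1) ≠ 0) (a : K) :
    (X * kreinPoly n b c N - C a * kreinPoly n b c (N - 1)).natDegree = N + 1 := by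
  have hN' := natDegree_kreinPoly n b c hn hb N le_rfl
  have hlead : (X * kreinPoly n b c N).natDegree = N + 1 := by
    rw [natDegree_X_mul (ne_zero_of_natDegree_gt (n := 0) (by omega)), hN']
  have hlow : (C a * kreinPoly n b c (N - 1)).natDegree < N + 1 := by
    refine (natDegree_C_mul_le _ _).trans_lt ?_
    rw [natDegree_kreinPoly n b c hn hb (N - 1) (by omega)]
    omega
  rw [natDegree_sub_eq_left_of_natDegree_lt (hlead ▸ hlow), hlead]

lemma hasParity_X_mul_kreinPoly_sub {N : ℕ} (hN : 1 ≤ N) (a : K) :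
    (X * kreinPoly n b c N - C a * kreinPoly n b c (N - 1)).HasParity (N + 1) := by
  refine HasParity.sub ?_ ?_
  · simpa [add_comm] using hasParity_X.mul (hasParity_kreinPoly n b c N)
  · have h := ((hasParity_C a).mul (hasParity_kreinPoly n b c (N - 1))).add_two
    rwa [zero_add, show N - 1 + 2 = N + 1 by omega] at h

end KreinPoly

namespace IsAssocScheme

variable {X : Type*} [Fintype X] [DecidableEq X] {s : ℕ} {A : ℕ → Matrix X X ℝ}

lemma existsUnique_rel (hA : IsAssocScheme s A) (x y : X) : ∃! i, i ≤ s ∧ A i x y = 1 := by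
  have hsum : ∑ i ∈ range (s + 1), A i x y = 1 := by
    simpa [allOnes, Matrix.sum_apply] using congrFun (congrFun hA.sum_eq x) y
  have hcard : ((range (s + 1)).filter fun i => A i x y = 1).card = 1 := by
    have h : ∑ i ∈ range (s + 1), A i x y = ∑ i ∈ range (s + 1), if A i x y = 1 then 1 else 0 :=
      sum_congr rfl fun i hi => by
        rcases hA.zero_one i (Nat.lt_succ_iff.mp (mem_range.mp hi)) x y with h | h <;> simp [h]
    exact_mod_cast (natCast_card_filter (R := ℝ) _ _).trans (h.symm.trans hsum)
  obtain ⟨i, hi⟩ := card_eq_one.mp hcard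
  have hmem : ∀ j, j ≤ s ∧ A j x y = 1 ↔ j = i := fun j => by
    simpa [Nat.lt_succ_iff] using Finset.ext_iff.mp hi j
  exact ⟨i, (hmem i).mpr rfl, fun j hj => (hmem j).mp hj⟩

noncomputable def rel (hA : IsAssocScheme s A) (x y : X) : ℕ :=
  (hA.existsUnique_rel x y).exists.choose

lemma rel_le (hA : IsAssocScheme s A) (x y : X) : hA.rel x y ≤ s :=
  (hA.existsUnique_rel x y).exists.choose_spec.1

lemma apply_rel (hA : IsAssocScheme s A) (x y : X) : A (hA.rel x y) x y = 1 :=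
  (hA.existsUnique_rel x y).exists.choose_spec.2

lemma rel_eq_of_apply_eq_one (hA : IsAssocScheme s A) {i : ℕ} (hi : i ≤ s) {x y : X}
    (h : A i x y = 1) : hA.rel x y = i :=
  (hA.existsUnique_rel x y).unique ⟨hA.rel_le x y, hA.apply_rel x y⟩ ⟨hi, h⟩

lemma apply_eq_zero_of_ne_rel (hA : IsAssocScheme s A) {i : ℕ} (hi : i ≤ s) {x y : X}
    (h : i ≠ hA.rel x y) : A i x y = 0 :=
  (hA.zero_one i hi x y).resolve_right fun h1 => h (hA.rel_eq_of_apply_eq_one hi h1).symm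

lemma rel_self (hA : IsAssocScheme s A) (x : X) : hA.rel x x = 0 :=
  hA.rel_eq_of_apply_eq_one (Nat.zero_le s) (by simp [hA.eq_one])

lemma eq_of_rel_eq_zero (hA : IsAssocScheme s A) {x y : X} (h : hA.rel x y = 0) : x = y := by
  by_contra hxy
  simpa [h, hA.eq_one, hxy] using hA.apply_rel x y

lemma apply_eq_of_eq_sum (hA : IsAssocScheme s A) {M : Matrix X X ℝ} {v : ℕ → ℝ}
    (hM : M = ∑ k ∈ range (s + 1), v k • A k) (x y : X) : M x y = v (hA.rel x y) := by
  rw [hM, Matrix.sum_apply,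
    sum_eq_single_of_mem _ (mem_range.mpr (Nat.lt_succ_of_le (hA.rel_le x y)))]
  · simp [hA.apply_rel]
  · intro k hk hne
    simp [hA.apply_eq_zero_of_ne_rel (Nat.lt_succ_iff.mp (mem_range.mp hk)) hne]

/-- `∑ y, A i x y = ∑ j, (A i * A j) x x`, and a matrix in the span of the `A k` has constant
diagonal. -/
lemma sum_apply_eq_sum_apply (hA : IsAssocScheme s A) {i : ℕ} (hi : i ≤ s) (x x' : X) :
    ∑ y, A i x y = ∑ y, A i x' y := by
  have hdiag : ∀ z, ∑ y, A i z y = ∑ j ∈ range (s + 1), (A i * A j) z z := fun z => by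
    have h : ∑ y, A i z y = (A i * allOnes X) z z := by simp [Matrix.mul_apply, allOnes]
    rw [h, ← hA.sum_eq, Matrix.mul_sum, Matrix.sum_apply]
  rw [hdiag, hdiag]
  refine sum_congr rfl fun j hj => ?_
  obtain ⟨p, hp⟩ := hA.mul_closed i hi j (Nat.lt_succ_iff.mp (mem_range.mp hj))
  rw [hA.apply_eq_of_eq_sum hp, hA.apply_eq_of_eq_sum hp, hA.rel_self, hA.rel_self]

lemma exists_rel_eq (hA : IsAssocScheme s A) {i : ℕ} (hi : i ≤ s) (x : X) :
    ∃ y, hA.rel x y = i := by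
  obtain ⟨x₀, y₀, h₀⟩ : ∃ x₀ y₀, A i x₀ y₀ ≠ 0 := by
    by_contra! h
    exact hA.nonempty i hi (Matrix.ext h)
  have hpos : 0 < ∑ y, A i x y := by
    rw [hA.sum_apply_eq_sum_apply hi x x₀]
    refine sum_pos' (fun y _ => ?_) ⟨y₀, mem_univ _, ?_⟩
    · rcases hA.zero_one i hi x₀ y with h | h <;> simp [h]
    · rcases hA.zero_one i hi x₀ y₀ with h | h <;> simp_all
  obtain ⟨y, -, hy⟩ := exists_ne_zero_of_sum_ne_zero hpos.ne'
  exact ⟨y, hA.rel_eq_of_apply_eq_one hi ((hA.zero_one i hi x y).resolve_left hy)⟩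

end IsAssocScheme

namespace IsPrimIdem

variable {X : Type*} [Fintype X] [DecidableEq X] {s : ℕ} {A E : ℕ → Matrix X X ℝ}

lemma trace_zero [Nonempty X] (hE : IsPrimIdem s A E) : trace (E 0) = 1 := by
  simp [hE.zero_eq, trace, allOnes]

lemma linearIndependent (hE : IsPrimIdem s A E) (hne : ∀ j ≤ s, E j ≠ 0) :
    LinearIndependent ℝ fun j : Fin (s + 1) => E j := by
  refine Fintype.linearIndependent_iff.mpr fun g hg j => ?_
  have h := congrArg (· * E j) hg
  simp only [sum_mul, Matrix.smul_mul, zero_mul] at h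
  rw [sum_eq_single j (fun i _ hij => by
      rw [hE.orth_idem i (Nat.lt_succ_iff.mp i.2) j (Nat.lt_succ_iff.mp j.2),
        if_neg (Fin.val_injective.ne hij), smul_zero]) (by simp),
    hE.orth_idem j (Nat.lt_succ_iff.mp j.2) j (Nat.lt_succ_iff.mp j.2), if_pos rfl] at h
  exact (smul_eq_zero.mp h).resolve_right (hne j (Nat.lt_succ_iff.mp j.2))

lemma mem_span_of_ne_zero (hE : IsPrimIdem s A E) (hne : ∀ j ≤ s, E j ≠ 0) {k : ℕ}
    (hk : k ≤ s) : A k ∈ Submodule.span ℝ (Set.range fun j : Fin (s + 1) => E j) := by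
  have hle : Submodule.span ℝ (Set.range fun j : Fin (s + 1) => E j) ≤
      Submodule.span ℝ (Set.range fun j : Fin (s + 1) => A j) := by
    refine Submodule.span_le.mpr ?_
    rintro _ ⟨j, rfl⟩
    obtain ⟨v, hv⟩ := hE.mem_span j (Nat.lt_succ_iff.mp j.2)
    show E j ∈ _
    rw [hv, sum_range fun k => v k • A k]
    exact Submodule.sum_mem _ fun k _ => Submodule.smul_mem _ _ (Submodule.subset_span ⟨k, rfl⟩)
  have heq := Submodule.eq_of_le_of_finrank_le hle <| by
    rw [finrank_span_eq_card (hE.linearIndependent hne), Fintype.card_fin]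
    exact (finrank_range_le_card _).trans (Fintype.card_fin _).le
  exact heq ▸ Submodule.subset_span ⟨⟨k, Nat.lt_succ_of_le hk⟩, rfl⟩

lemma rel_eq_of_forall_apply_eq (hA : IsAssocScheme s A) (hE : IsPrimIdem s A E)
    (hne : ∀ j ≤ s, E j ≠ 0) {x y x' y' : X} (h : ∀ j ≤ s, E j x y = E j x' y') :
    hA.rel x' y' = hA.rel x y := by
  obtain ⟨d, hd⟩ := (Submodule.mem_span_range_iff_exists_fun ℝ).mp
    (hE.mem_span_of_ne_zero hne (hA.rel_le x y))
  refine hA.rel_eq_of_apply_eq_one (hA.rel_le x y) ?_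
  rw [← hd, ← hA.apply_rel x y, ← hd]
  simp only [Matrix.sum_apply, Matrix.smul_apply, h _ (Nat.lt_succ_iff.mp (Fin.is_lt _))]

lemma exists_dotProduct_eq_div (hA : IsAssocScheme s A) (hE : IsPrimIdem s A E) (hs : 1 ≤ s)
    {θ : ℕ → ℝ} (hθ : E 1 = ∑ k ∈ range (s + 1), θ k • A k) (hθ0 : 0 < θ 0) :
    ∃ u : X → Fin (E 1).rank → ℝ, ∀ x y, u x ⬝ᵥ u y = θ (hA.rel x y) / θ 0 := by
  obtain ⟨c, hc⟩ := (hE.symm 1 hs).exists_dotProduct_eq (by simpa using hE.orth_idem 1 hs 1 hs)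
  refine ⟨fun x => (√(θ 0))⁻¹ • c x, fun x y => ?_⟩
  rw [smul_dotProduct, dotProduct_smul, hc, hA.apply_eq_of_eq_sum hθ, smul_eq_mul, smul_eq_mul,
    ← mul_assoc, ← mul_inv, Real.mul_self_sqrt hθ0.le, inv_mul_eq_div]

end IsPrimIdem

namespace IsKrein

variable {X : Type*} [Fintype X] {s : ℕ} {E : ℕ → Matrix X X ℝ} {q : ℕ → ℕ → ℕ → ℝ}

lemma mul_apply_eq (hK : IsKrein s E q) {i j : ℕ} (hi : i ≤ s) (hj : j ≤ s) (x y : X) :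
    E i x y * E j x y = (Fintype.card X : ℝ)⁻¹ * ∑ k ∈ range (s + 1), q i j k * E k x y := by
  simpa [Matrix.sum_apply] using congrFun (congrFun (hK i hi j hj) x) y

variable [DecidableEq X] {A : ℕ → Matrix X X ℝ}

lemma hadamard_mul (hE : IsPrimIdem s A E) (hK : IsKrein s E q) {i j k : ℕ} (hi : i ≤ s)
    (hj : j ≤ s) (hk : k ≤ s) :
    (E i ⊙ E j) * E k = ((Fintype.card X : ℝ)⁻¹ * q i j k) • E k := by
  rw [hK i hi j hj, Matrix.smul_mul, sum_mul,
    sum_eq_single_of_mem k (mem_range.mpr (Nat.lt_succ_of_le hk))]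
  · rw [Matrix.smul_mul, hE.orth_idem k hk k hk, if_pos rfl, smul_smul]
  · intro l hl hlk
    rw [Matrix.smul_mul, hE.orth_idem l (Nat.lt_succ_iff.mp (mem_range.mp hl)) k hk, if_neg hlk,
      smul_zero]

lemma mul_trace_comm [Nonempty X] (hE : IsPrimIdem s A E) (hK : IsKrein s E q) {i j k : ℕ}
    (hi : i ≤ s) (hj : j ≤ s) (hk : k ≤ s) :
    q i j k * trace (E k) = q i k j * trace (E j) := by
  have h : trace ((E i ⊙ E j) * E k) = trace ((E i ⊙ E k) * E j) :=
    calc trace ((E i ⊙ E j) * E k) = trace ((E i ⊙ E j) * (E k)ᵀ) := by rw [(hE.symm k hk).eq]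
      _ = trace ((E i ⊙ E k) * (E j)ᵀ) := by
        rw [← sum_hadamard_eq, ← sum_hadamard_eq, hadamard_assoc, hadamard_comm (E j),
          ← hadamard_assoc]
      _ = trace ((E i ⊙ E k) * E j) := by rw [(hE.symm j hj).eq]
  rw [hadamard_mul hE hK hi hj hk, hadamard_mul hE hK hi hk hj, trace_smul, trace_smul,
    smul_eq_mul, smul_eq_mul, mul_assoc, mul_assoc] at h
  exact mul_left_cancel₀ (by simp) h

end IsKrein

namespace IsQPoly

section Bipartite

variable {s : ℕ} {q : ℕ → ℕ → ℕ → ℝ}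

lemma krein_eq_zero (hQ : IsQPoly s q) (hbip : ∀ i ≤ s, q 1 i i = 0) {j k : ℕ} (hj : j ≤ s)
    (hk : k ≤ s) (h1 : k + 1 ≠ j) (h2 : k ≠ j + 1) : q 1 j k = 0 := by
  rcases lt_trichotomy (k + 1) j with h | h | h
  · exact hQ.2 j hj k hk (Or.inr h)
  · exact absurd h h1
  · rcases eq_or_ne k j with rfl | hkj
    · exact hbip k hk
    · exact hQ.2 j hj k hk (Or.inl (by omega))

lemma sum_range_eq_of_lt (hQ : IsQPoly s q) (hbip : ∀ i ≤ s, q 1 i i = 0) {j : ℕ} (hj : 1 ≤ j)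
    (hjs : j < s) (f : ℕ → ℝ) :
    ∑ k ∈ range (s + 1), q 1 j k * f k =
      q 1 j (j - 1) * f (j - 1) + q 1 j (j + 1) * f (j + 1) := by
  rw [← sum_pair (f := fun k => q 1 j k * f k) (by omega : j - 1 ≠ j + 1)]
  refine (sum_subset (fun k hk => ?_) fun k hk hk' => ?_).symm
  · simp only [mem_insert, mem_singleton] at hk
    rcases hk with rfl | rfl <;> simp only [mem_range] <;> omega
  · simp only [mem_insert, mem_singleton, not_or] at hk'
    rw [krein_eq_zero hQ hbip hjs.le (Nat.lt_succ_iff.mp (mem_range.mp hk)) (by omega) hk'.2,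
      zero_mul]

lemma sum_range_eq_top (hQ : IsQPoly s q) (hbip : ∀ i ≤ s, q 1 i i = 0) (hs : 1 ≤ s)
    (f : ℕ → ℝ) : ∑ k ∈ range (s + 1), q 1 s k * f k = q 1 s (s - 1) * f (s - 1) := by
  rw [← sum_singleton (fun k => q 1 s k * f k) (s - 1)]
  refine (sum_subset (by simp) fun k hk hk' => ?_).symm
  have hk := Nat.lt_succ_iff.mp (mem_range.mp hk)
  rw [krein_eq_zero hQ hbip le_rfl hk (by simp at hk'; omega) (by omega), zero_mul]

end Bipartite

variable {X : Type*} [Fintype X] [DecidableEq X] [Nonempty X] {s : ℕ}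
  {A E : ℕ → Matrix X X ℝ} {q : ℕ → ℕ → ℕ → ℝ}

lemma trace_pos (hE : IsPrimIdem s A E) (hK : IsKrein s E q) (hQ : IsQPoly s q) :
    ∀ j ≤ s, 0 < trace (E j)
  | 0, _ => by simp [hE.trace_zero]
  | j + 1, hj => by
    have h := hK.mul_trace_comm hE (by omega : 1 ≤ s) (Nat.le_of_succ_le hj) hj
    have hpos := mul_pos (hQ.1 (j + 1) hj j (by omega) (Or.inr rfl))
      (trace_pos hE hK hQ j (by omega))
    rw [← h] at hpos
    exact pos_of_mul_pos_right hpos (hQ.1 j (by omega) (j + 1) hj (Or.inl rfl)).le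

lemma idem_ne_zero (hE : IsPrimIdem s A E) (hK : IsKrein s E q) (hQ : IsQPoly s q) :
    ∀ j ≤ s, E j ≠ 0 := fun j hj h => by
  simpa [h] using hQ.trace_pos hE hK j hj

local notation "Φ" =>
  kreinPoly (Fintype.card X : ℝ) (fun j => q 1 j (j + 1)) (fun j => q 1 j (j - 1))

lemma apply_eq_eval_kreinPoly (hE : IsPrimIdem s A E) (hK : IsKrein s E q) (hQ : IsQPoly s q)
    (hbip : ∀ i ≤ s, q 1 i i = 0) {j : ℕ} (hj : j ≤ s) (x y : X) :
    E j x y = (Φ j).eval (E 1 x y) := by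
  refine eval_kreinPoly _ _ _ (f := fun j => E j x y) (by simp)
    (fun j hj => (hQ.1 (j + 1) (by omega) (j + 2) hj (Or.inl rfl)).ne')
    (by simp [hE.zero_eq, allOnes]) rfl (fun j hj => ?_) j hj
  rw [hK.mul_apply_eq (by omega) (by omega), sum_range_eq_of_lt hQ hbip (by omega) (by omega)]
  simp

lemma eval_boundary_eq_zero (hE : IsPrimIdem s A E) (hK : IsKrein s E q) (hQ : IsQPoly s q)
    (hbip : ∀ i ≤ s, q 1 i i = 0) (hs : 1 ≤ s) (x y : X) :
    (Polynomial.X * Φ s - C ((Fintype.card X : ℝ)⁻¹ * q 1 s (s - 1)) * Φ (s - 1)).eval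
      (E 1 x y) = 0 := by
  have h := hK.mul_apply_eq hs le_rfl x y
  rw [sum_range_eq_top hQ hbip hs, apply_eq_eval_kreinPoly hE hK hQ hbip le_rfl,
    apply_eq_eval_kreinPoly hE hK hQ hbip (Nat.sub_le s 1)] at h
  simp only [eval_sub, eval_mul, eval_X, eval_C]
  linear_combination h

variable {θ : ℕ → ℝ}

lemma injOn_of_eq_sum (hA : IsAssocScheme s A) (hE : IsPrimIdem s A E) (hK : IsKrein s E q)
    (hQ : IsQPoly s q) (hbip : ∀ i ≤ s, q 1 i i = 0)
    (hθ : E 1 = ∑ k ∈ range (s + 1), θ k • A k) : Set.InjOn θ (range (s + 1)) := by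
  intro k hk l hl hkl
  obtain ⟨x⟩ := ‹Nonempty X›
  obtain ⟨y, rfl⟩ := hA.exists_rel_eq (Nat.lt_succ_iff.mp (mem_range.mp hk)) x
  obtain ⟨y', rfl⟩ := hA.exists_rel_eq (Nat.lt_succ_iff.mp (mem_range.mp hl)) x
  have h1 : E 1 x y = E 1 x y' := by
    rw [hA.apply_eq_of_eq_sum hθ, hA.apply_eq_of_eq_sum hθ, hkl]
  refine (hE.rel_eq_of_forall_apply_eq hA (hQ.idem_ne_zero hE hK) fun j hj => ?_).symm
  rw [apply_eq_eval_kreinPoly hE hK hQ hbip hj, apply_eq_eval_kreinPoly hE hK hQ hbip hj, h1]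

lemma exists_eq_neg_of_eq_sum (hA : IsAssocScheme s A) (hE : IsPrimIdem s A E)
    (hK : IsKrein s E q) (hQ : IsQPoly s q) (hbip : ∀ i ≤ s, q 1 i i = 0) (hs : 1 ≤ s)
    (hθ : E 1 = ∑ k ∈ range (s + 1), θ k • A k) {k : ℕ} (hk : k ≤ s) :
    ∃ l ≤ s, θ l = -θ k := by
  set Ψ := Polynomial.X * Φ s - C ((Fintype.card X : ℝ)⁻¹ * q 1 s (s - 1)) * Φ (s - 1)
  have hdeg : Ψ.natDegree = s + 1 := natDegree_X_mul_kreinPoly_sub _ _ _ hs (by simp)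
    (fun j hj => (hQ.1 (j + 1) (by omega) (j + 2) hj (Or.inl rfl)).ne') _
  have hΨ : Ψ ≠ 0 := ne_zero_of_natDegree_gt (n := 0) (by omega)
  have hroot : ∀ t ∈ (range (s + 1)).image θ, Ψ.IsRoot t := by
    simp only [mem_image, mem_range]
    rintro _ ⟨l, hl, rfl⟩
    obtain ⟨x⟩ := ‹Nonempty X›
    obtain ⟨y, rfl⟩ := hA.exists_rel_eq (Nat.lt_succ_iff.mp hl) x
    rw [IsRoot, ← hA.apply_eq_of_eq_sum hθ]
    exact eval_boundary_eq_zero hE hK hQ hbip hs x y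
  have hcard : ((range (s + 1)).image θ).card = s + 1 := by
    rw [card_image_of_injOn (injOn_of_eq_sum hA hE hK hQ hbip hθ), card_range]
  obtain ⟨l, hl, hθl⟩ := mem_image.mp <|
    (hasParity_X_mul_kreinPoly_sub _ _ _ hs _).neg_mem_of_isRoot hΨ hroot
      (hdeg.trans hcard.symm).le (mem_image_of_mem θ (mem_range.mpr (Nat.lt_succ_of_le hk)))
  exact ⟨l, Nat.lt_succ_iff.mp (mem_range.mp hl), hθl⟩

lemma pos_zero_of_eq_sum (hA : IsAssocScheme s A) (hE : IsPrimIdem s A E) (hK : IsKrein s E q)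
    (hQ : IsQPoly s q) (hs : 1 ≤ s) (hθ : E 1 = ∑ k ∈ range (s + 1), θ k • A k) : 0 < θ 0 := by
  have h := hQ.trace_pos hE hK 1 hs
  simp only [Matrix.trace, Matrix.diag, hA.apply_eq_of_eq_sum hθ, hA.rel_self, sum_const,
    card_univ, nsmul_eq_mul] at h
  exact pos_of_mul_pos_right h (Nat.cast_nonneg _)

end IsQPoly

/-- Let `(X, R)` be an `s`-class `Q`-polynomial scheme with `m = rank (E 1)` which is
`Q`-bipartite, i.e. `q 1 i i = 0` for all `0 ≤ i ≤ s`.  Then `|X| ≤ 2 C(m + s - 2, s - 1)`. -/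
theorem card_le_QPoly_bipartite (X : Type*) [Fintype X] [DecidableEq X] (s : ℕ) (hs : 1 ≤ s)
    (A E : ℕ → Matrix X X ℝ) (q : ℕ → ℕ → ℕ → ℝ)
    (hA : IsAssocScheme s A) (hE : IsPrimIdem s A E)
    (hK : IsKrein s E q) (hQ : IsQPoly s q)
    (hbip : ∀ i ≤ s, q 1 i i = 0) :
    Fintype.card X ≤ 2 * ((E 1).rank + s - 2).choose (s - 1) := by
  rcases isEmpty_or_nonempty X with hX | hX
  · simp
  obtain ⟨θ, hθ⟩ := hE.mem_span 1 hs
  have hθ0 := hQ.pos_zero_of_eq_sum hA hE hK hs hθ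
  have hinj : Set.InjOn (fun k => θ k / θ 0) (range (s + 1)) := fun k hk l hl h =>
    hQ.injOn_of_eq_sum hA hE hK hbip hθ hk hl ((div_left_inj' hθ0.ne').mp h)
  have hneg k (hk : k ≤ s) := hQ.exists_eq_neg_of_eq_sum hA hE hK hbip hs hθ hk
  have hrel x y : hA.rel x y ∈ range (s + 1) := mem_range.mpr (Nat.lt_succ_of_le (hA.rel_le x y))
  obtain ⟨u, hu⟩ := hE.exists_dotProduct_eq_div hA hs hθ hθ0
  have hbound := card_le_two_mul_multichoose_of_antipodal u
    (D := (range (s + 1)).image fun k => θ k / θ 0)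
    (fun x => by rw [hu, hA.rel_self, div_self hθ0.ne'])
    (fun d hd => by
      obtain ⟨k, hk, rfl⟩ := mem_image.mp hd
      obtain ⟨l, hl, hθl⟩ := hneg k (Nat.lt_succ_iff.mp (mem_range.mp hk))
      exact mem_image.mpr ⟨l, mem_range.mpr (Nat.lt_succ_of_le hl), by rw [hθl, neg_div]⟩)
    (fun x y => hu x y ▸ mem_image_of_mem _ (hrel x y))
    (fun x y h => hA.eq_of_rel_eq_zero <| hinj (hrel x y) (by simp)
      ((hu x y).symm.trans (h.trans (div_self hθ0.ne').symm)))
    (fun x => by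
      obtain ⟨l, hl, hθl⟩ := hneg 0 (Nat.zero_le s)
      obtain ⟨y, hy⟩ := hA.exists_rel_eq hl x
      exact ⟨y, by rw [hu, hy, hθl, neg_div, div_self hθ0.ne']⟩)
  rwa [card_image_of_injOn hinj, card_range, Fintype.card_fin, Nat.multichoose_eq,
    show s + 1 - 2 = s - 1 by omega, show (E 1).rank + (s - 1) - 1 = (E 1).rank + s - 2 by omega]
    at hbound
end
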